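/- Let M = 1, t > 0, x ∈ ℝ, and let C₀ be a contour from e^{3iπ/4}∞ to e^{−iπ/4}∞ passing below z = i. Define D(t,x) := ∫_{C₀} e^{−i(z−x)²/(4t)} [ (t−x+i) + 2i(i−x)/(z−i) + 4t/(z−i)² ] dz. Then D(t,x) = (t−(x+i)) ∫_{C₀} e^{−i(z−x)²/(4t)} dz, and consequently −2 Im(∂ₓ log D(t,x)) = 2/((x−t)² + 1). -/

import Mathlib

/-!
On `C₀ = {-i + ω s}` with `ω = e^{-iπ/4}` we have `ω² = -i`, so `e^{-i(z-x)²/(4t)}` becomes the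
Gaussian `e^{-(s-σ)²/(4t)}` with a complex centre `σ`; shifting the centre back to the real line
gives `I₀ = 2√(πt) ω`, independent of `x`. Integrating the exact derivative of
`e^{-i(z-x)²/(4t)} / (z - i)` along `C₀` gives the recursion expressing `I₂` through `I₁` and `I₀`,
and substituting it collapses `D = (t-x+i) I₀ + 2i(i-x) I₁ + 4t I₂` to `(t-x-i) I₀`. Hence
`∂ₓ log D = 1 / (x - t + i)`, whose imaginary part is `-1 / ((x-t)² + 1)`.
-/

open MeasureTheory Complex Filter Set

/-- The contour `C₀`: the line through `-i` in direction `e^{-iπ/4}` (from `e^{3iπ/4}∞`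
to `e^{-iπ/4}∞`, passing below `z = i`). -/
noncomputable def c0path (s : ℝ) : ℂ := -Complex.I + Complex.exp (-(Real.pi / 4) * Complex.I) * s

/-- `D(t,x) = ∫_{C₀} e^{-i(z-x)²/(4t)} [(t-x+i) + 2i(i-x)/(z-i) + 4t/(z-i)²] dz`. -/
noncomputable def Dfun (t : ℝ) (x : ℂ) : ℂ :=
  ∫ s : ℝ, Complex.exp (-Complex.I * (c0path s - x) ^ 2 / (4 * t)) *
      (((t : ℂ) - x + Complex.I) + 2 * Complex.I * (Complex.I - x) / (c0path s - Complex.I)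
        + 4 * t / (c0path s - Complex.I) ^ 2) *
      Complex.exp (-(Real.pi / 4) * Complex.I)

open Real

local notation "ω" => Complex.exp (-(Real.pi / 4) * Complex.I)

theorem integrable_cexp_neg_mul_sq_sub {b : ℂ} (hb : 0 < b.re) (σ : ℂ) :
    Integrable fun x : ℝ => cexp (-b * (x - σ) ^ 2) := by
  convert integrable_cexp_quadratic hb (2 * b * σ) (-b * σ ^ 2) using 3
  ring

theorem integral_cexp_neg_mul_sq_sub {b : ℂ} (hb : 0 < b.re) (σ : ℂ) :
    ∫ x : ℝ, cexp (-b * (x - σ) ^ 2) = (π / b) ^ (1 / 2 : ℂ) := by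
  have hb' : b ≠ 0 := by contrapose! hb; simp [hb]
  have hquad (x : ℝ) : -b * (x - σ) ^ 2 = -b * x ^ 2 + 2 * b * σ * x + -b * σ ^ 2 := by ring
  simp_rw [hquad]
  rw [integral_cexp_quadratic (by simpa using hb), neg_neg]
  convert mul_one _ using 2
  rw [Complex.exp_eq_one_iff]
  exact ⟨0, by field_simp; ring⟩

theorem exp_neg_pi_div_four_mul_I_eq : ω = (√2 / 2 : ℝ) * (1 - I) := by
  have h : -(π / 4) * I = ((-(π / 4) : ℝ) : ℂ) * I := by push_cast; ring
  rw [h, Complex.exp_mul_I, ← ofReal_cos, ← ofReal_sin, Real.cos_neg, Real.sin_neg,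
    cos_pi_div_four, sin_pi_div_four]
  push_cast
  ring

theorem exp_neg_pi_div_four_mul_I_sq : ω ^ 2 = -I := by
  have h2 : ((√2 : ℝ) : ℂ) ^ 2 = 2 := by norm_cast; simp
  rw [exp_neg_pi_div_four_mul_I_eq]
  push_cast
  linear_combination (1 - I) ^ 2 / 4 * h2 + (1 / 2 : ℂ) * I_sq

theorem two_le_normSq_c0path_sub_I (s : ℝ) : 2 ≤ normSq (c0path s - I) := by
  have h2 : √2 ^ 2 = 2 := Real.sq_sqrt (by norm_num)
  have hcoord : c0path s - I = ((√2 / 2 * s : ℝ) : ℂ) + ((-(√2 / 2 * s) - 2 : ℝ) : ℂ) * I := by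
    rw [c0path, exp_neg_pi_div_four_mul_I_eq]
    push_cast
    ring
  rw [hcoord, normSq_add_mul_I]
  nlinarith [sq_nonneg (s + √2)]

theorem one_le_norm_c0path_sub_I (s : ℝ) : 1 ≤ ‖c0path s - I‖ := by
  have := two_le_normSq_c0path_sub_I s
  rw [normSq_eq_norm_sq] at this
  nlinarith [norm_nonneg (c0path s - I)]

theorem c0path_sub_I_ne_zero (s : ℝ) : c0path s - I ≠ 0 :=
  norm_pos_iff.mp (one_pos.trans_le (one_le_norm_c0path_sub_I s))

theorem hasDerivAt_c0path (s : ℝ) : HasDerivAt c0path ω s :=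
  (((hasDerivAt_id s).ofReal_comp.const_mul ω).const_add (-I)).congr_deriv (by simp)

noncomputable def c0Gauss (t : ℝ) (w : ℂ) (s : ℝ) : ℂ := cexp (-I * (c0path s - w) ^ 2 / (4 * t))

theorem c0Gauss_eq (t : ℝ) (w : ℂ) (s : ℝ) :
    c0Gauss t w s = cexp (-(4 * t : ℂ)⁻¹ * (s - (w + I) / ω) ^ 2) := by
  have hc : c0path s - w = ω * (s - (w + I) / ω) := by
    rw [c0path, mul_sub, mul_div_cancel₀ _ (Complex.exp_ne_zero _)]
    ring
  rw [c0Gauss, hc]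
  congr 1
  linear_combination (-I * (s - (w + I) / ω) ^ 2 / (4 * t)) * exp_neg_pi_div_four_mul_I_sq
    + ((s - (w + I) / ω) ^ 2 / (4 * t)) * I_sq

theorem re_inv_four_mul_pos {t : ℝ} (ht : 0 < t) : 0 < (4 * t : ℂ)⁻¹.re := by
  rw [← ofReal_ofNat, ← ofReal_mul, ← ofReal_inv, ofReal_re]
  positivity

theorem integrable_c0Gauss {t : ℝ} (ht : 0 < t) (w : ℂ) : Integrable (c0Gauss t w) := by
  simp_rw [funext (c0Gauss_eq t w)]
  exact integrable_cexp_neg_mul_sq_sub (re_inv_four_mul_pos ht) _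

theorem integral_c0Gauss {t : ℝ} (ht : 0 < t) (w : ℂ) :
    ∫ s, c0Gauss t w s = (4 * π * t : ℂ) ^ (1 / 2 : ℂ) := by
  simp_rw [c0Gauss_eq, integral_cexp_neg_mul_sq_sub (re_inv_four_mul_pos ht), div_inv_eq_mul]
  ring_nf

noncomputable def gaussInvPow (t : ℝ) (w : ℂ) (n : ℕ) (s : ℝ) : ℂ :=
  c0Gauss t w s * ((c0path s - I) ^ n)⁻¹ * ω

-- The paper's `I_P(t, w)`; the factor `ω` is `dz/ds` along `C₀`.
noncomputable def gaussInvPowIntegral (t : ℝ) (w : ℂ) (n : ℕ) : ℂ := ∫ s, gaussInvPow t w n s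

theorem integrable_gaussInvPow {t : ℝ} (ht : 0 < t) (w : ℂ) (n : ℕ) :
    Integrable (gaussInvPow t w n) := by
  have hcont : Continuous fun s => ((c0path s - I) ^ n)⁻¹ :=
    ((by unfold c0path; fun_prop : Continuous fun s => (c0path s - I) ^ n)).inv₀
      fun s => pow_ne_zero n (c0path_sub_I_ne_zero s)
  have hbound : ∀ s, ‖((c0path s - I) ^ n)⁻¹‖ ≤ 1 := fun s => by
    rw [norm_inv, norm_pow]
    exact inv_le_one_of_one_le₀ (one_le_pow₀ (one_le_norm_c0path_sub_I s))
  exact ((integrable_c0Gauss ht w).mul_bdd hcont.aestronglyMeasurable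
    (Eventually.of_forall hbound)).mul_const ω

theorem gaussInvPowIntegral_zero {t : ℝ} (ht : 0 < t) (w : ℂ) :
    gaussInvPowIntegral t w 0 = (4 * π * t : ℂ) ^ (1 / 2 : ℂ) * ω := by
  simp only [gaussInvPowIntegral, gaussInvPow, pow_zero, inv_one, mul_one]
  rw [integral_mul_const, integral_c0Gauss ht]

theorem hasDerivAt_c0Gauss (t : ℝ) (w : ℂ) (s : ℝ) :
    HasDerivAt (c0Gauss t w) (c0Gauss t w s * (-I * (c0path s - w) * ω / (2 * t))) s := by
  refine (((((hasDerivAt_c0path s).sub_const w).pow 2).const_mul (-I)).div_const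
    (4 * (t : ℂ)) |>.cexp).congr_deriv ?_
  simp only [c0Gauss, Pi.pow_apply]
  push_cast
  ring

theorem hasDerivAt_gaussInvPow_one {t : ℝ} (w : ℂ) (s : ℝ) :
    HasDerivAt (gaussInvPow t w 1)
      (ω * (-(I / (2 * t)) * gaussInvPow t w 0 s - I * (I - w) / (2 * t) * gaussInvPow t w 1 s
        - gaussInvPow t w 2 s)) s := by
  have hz := c0path_sub_I_ne_zero s
  have hfun : gaussInvPow t w 1 = fun u => c0Gauss t w u * (c0path u - I)⁻¹ * ω := by
    funext u
    simp only [gaussInvPow, pow_one]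
  rw [hfun]
  refine ((hasDerivAt_c0Gauss t w s).mul
    (((hasDerivAt_c0path s).sub_const I).inv hz)).mul_const ω |>.congr_deriv ?_
  simp only [gaussInvPow, Pi.inv_apply]
  field_simp
  ring

theorem gaussInvPowIntegral_two {t : ℝ} (ht : 0 < t) (w : ℂ) :
    gaussInvPowIntegral t w 2 = I * (w - I) / (2 * t) * gaussInvPowIntegral t w 1
      - I / (2 * t) * gaussInvPowIntegral t w 0 := by
  have hint := integrable_gaussInvPow ht w
  have hzero := integral_eq_zero_of_hasDerivAt_of_integrable
    (hasDerivAt_gaussInvPow_one w)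
    ((((hint 0).const_mul _).sub ((hint 1).const_mul _)).sub (hint 2) |>.const_mul ω) (hint 1)
  rw [integral_const_mul, integral_sub, integral_sub, integral_const_mul, integral_const_mul,
    mul_eq_zero] at hzero
  · rcases hzero with hω | hzero
    · exact absurd hω (Complex.exp_ne_zero _)
    · simp only [gaussInvPowIntegral]
      linear_combination -hzero
  · exact (hint 0).const_mul _
  · exact (hint 1).const_mul _
  · exact ((hint 0).const_mul _).sub ((hint 1).const_mul _)
  · exact hint 2

theorem Dfun_eq_sum_gaussInvPowIntegral {t : ℝ} (ht : 0 < t) (w : ℂ) :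
    Dfun t w = (t - w + I) * gaussInvPowIntegral t w 0
      + 2 * I * (I - w) * gaussInvPowIntegral t w 1 + 4 * t * gaussInvPowIntegral t w 2 := by
  have hint := integrable_gaussInvPow ht w
  have hintegrand : (fun s => cexp (-I * (c0path s - w) ^ 2 / (4 * t)) *
      (((t : ℂ) - w + I) + 2 * I * (I - w) / (c0path s - I) + 4 * t / (c0path s - I) ^ 2) * ω)
      = fun s => (t - w + I) * gaussInvPow t w 0 s + 2 * I * (I - w) * gaussInvPow t w 1 s
          + 4 * t * gaussInvPow t w 2 s := by
    funext s
    simp only [gaussInvPow, c0Gauss]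
    field_simp
  rw [Dfun, hintegrand, integral_add, integral_add, integral_const_mul, integral_const_mul,
    integral_const_mul]
  · rfl
  · exact (hint 0).const_mul _
  · exact (hint 1).const_mul _
  · exact ((hint 0).const_mul _).add ((hint 1).const_mul _)
  · exact (hint 2).const_mul _

theorem Dfun_eq {t : ℝ} (ht : 0 < t) (w : ℂ) :
    Dfun t w = (t - w - I) * ((4 * π * t : ℂ) ^ (1 / 2 : ℂ) * ω) := by
  have htc : (t : ℂ) ≠ 0 := ofReal_ne_zero.mpr ht.ne'
  rw [Dfun_eq_sum_gaussInvPowIntegral ht, gaussInvPowIntegral_two ht,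
    ← gaussInvPowIntegral_zero ht w]
  field_simp
  ring

theorem deriv_sub_mul_const_div {a K : ℂ} (hK : K ≠ 0) (z : ℂ) :
    deriv (fun w => (a - w) * K) z / ((a - z) * K) = (z - a)⁻¹ := by
  have hderiv : deriv (fun w => (a - w) * K) z = -K := by simp
  rw [hderiv, mul_comm, ← div_div, neg_div_self hK, ← neg_sub, div_neg, neg_div, neg_neg, one_div]

theorem im_inv_ofReal_add_I (r : ℝ) : ((r : ℂ) + I)⁻¹.im = -1 / (r ^ 2 + 1) := by
  simp [inv_im, normSq_apply, sq]

/-- `D(t,x) = (t-(x+i)) ∫_{C₀} e^{-i(z-x)²/(4t)} dz`, and the one-soliton formula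
`-2 Im(∂ₓ log D(t,x)) = 2/((x-t)²+1)`. -/
theorem stmt14 (t : ℝ) (ht : 0 < t) (x : ℝ) :
    Dfun t x
        = ((t : ℂ) - ((x : ℂ) + Complex.I)) *
          ∫ s : ℝ, Complex.exp (-Complex.I * (c0path s - (x : ℂ)) ^ 2 / (4 * t)) *
            Complex.exp (-(Real.pi / 4) * Complex.I) ∧
    -2 * ((deriv (fun w : ℂ => Dfun t w) (x : ℂ) / Dfun t (x : ℂ)).im) = 2 / ((x - t) ^ 2 + 1) := by
  set K : ℂ := (4 * π * t : ℂ) ^ (1 / 2 : ℂ) * ω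
  have hK0 : K ≠ 0 := mul_ne_zero
    (cpow_ne_zero_iff.mpr (Or.inl (by exact_mod_cast (by positivity : 4 * π * t ≠ 0))))
    (Complex.exp_ne_zero _)
  have hD : (fun w => Dfun t w) = fun w => (t - I - w) * K := funext fun w => by
    rw [Dfun_eq ht]; ring
  constructor
  · have hgauss : ∫ s : ℝ, cexp (-I * (c0path s - x) ^ 2 / (4 * t))
        = (4 * π * t : ℂ) ^ (1 / 2 : ℂ) := integral_c0Gauss ht x
    rw [integral_mul_const, hgauss, Dfun_eq ht]
    ring
  · have hcentre : (x : ℂ) - (t - I) = ((x - t : ℝ) : ℂ) + I := by push_cast; ring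
    rw [hD, Dfun_eq ht, show (t : ℂ) - x - I = t - I - x by ring, deriv_sub_mul_const_div hK0,
      hcentre, im_inv_ofReal_add_I]
    ring
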